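/- For every F ∈ 𝓕 and n ≥ 0, the subfunctor ker(η_F : F → Δ^{n+1}F ⊗ Ī^{⊗(n+1)}), where η_F is the unit of the adjunction between Δ^{n+1} and − ⊗ Ī^{⊗(n+1)}, is polynomial of degree at most n and contains every subfunctor of F that is polynomial of degree at most n. Consequently the inclusion of the full subcategory of polynomial functors of degree at most n into 𝓕 admits a right adjoint p_n, given by p_nF = ker(η_F). -/

import Mathlib

open CategoryTheory CategoryTheory.Limits TensorProduct MonoidalCategory

noncomputable section

variable (p : ℕ) [Fact p.Prime]

/-- `k = F_p`. -/
abbrev Kk (p : ℕ) : Type := ZMod p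

/-- The category `𝓕` of functors from finite-dimensional `F_p`-vector spaces
to `F_p`-vector spaces. -/
abbrev FF (p : ℕ) [Fact p.Prime] := FGModuleCat.{0} (Kk p) ⥤ ModuleCat.{0} (Kk p)

/-- The functor `V ↦ V ⊕ k` on finite-dimensional vector spaces. -/
def addOne : FGModuleCat.{0} (Kk p) ⥤ FGModuleCat.{0} (Kk p) where
  obj V := FGModuleCat.of (Kk p) (V × Kk p)
  map f := FGModuleCat.ofHom (LinearMap.prodMap f.hom.hom (LinearMap.id (R := Kk p) (M := Kk p)))
  map_id := by intros; apply FGModuleCat.hom_ext; apply LinearMap.ext; intro x; rfl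
  map_comp := by intros; apply FGModuleCat.hom_ext; apply LinearMap.ext; intro x; rfl

/-- The natural inclusion `i_V : V → V ⊕ k`. -/
def inclOne : 𝟭 (FGModuleCat.{0} (Kk p)) ⟶ addOne p where
  app V := FGModuleCat.ofHom (LinearMap.inl (Kk p) V (Kk p) : V →ₗ[Kk p] V × Kk p)
  naturality := by intros; apply FGModuleCat.hom_ext; apply LinearMap.ext; intro x; rfl

/-- The natural projection `V ⊕ k → V`. -/
def projOne : addOne p ⟶ 𝟭 (FGModuleCat.{0} (Kk p)) where
  app V := FGModuleCat.ofHom (LinearMap.fst (Kk p) V (Kk p) : V × Kk p →ₗ[Kk p] V)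
  naturality := by intros; apply FGModuleCat.hom_ext; apply LinearMap.ext; intro x; rfl

/-- Precomposition with `V ↦ V ⊕ k`, i.e. `F ↦ (V ↦ F(V ⊕ k))`. -/
def preAdd : FF p ⥤ FF p := (Functor.whiskeringLeft _ _ _).obj (addOne p)

/-- The natural transformation `F ⟶ F(− ⊕ k)` induced by the inclusions `i_V`. -/
def unitPre : 𝟭 (FF p) ⟶ preAdd p where
  app F := Functor.whiskerRight (inclOne p) F
  naturality := by
    intro F G α
    apply NatTrans.ext
    funext V
    exact (α.naturality ((inclOne p).app V)).symm

/-- The difference functor `Δ : 𝓕 → 𝓕`, the cokernel of `F ⟶ F(− ⊕ k)`. -/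
def Delta : FF p ⥤ FF p := cokernel (unitPre p)

/-- Iterates `Δ^n` of the difference functor. -/
def deltaIter : ℕ → (FF p ⥤ FF p)
  | 0 => 𝟭 (FF p)
  | n + 1 => deltaIter n ⋙ Delta p

/-- `F` is polynomial of degree at most `n` if `Δ^{n+1} F = 0`. -/
def IsPolyLE (n : ℕ) (F : FF p) : Prop := IsZero ((deltaIter p (n + 1)).obj F)



/-- The forgetful functor, i.e. the identity functor `Id ∈ 𝓕`. -/
def idFun : FF p := forget₂ (FGModuleCat.{0} (Kk p)) (ModuleCat.{0} (Kk p))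

/-- The constant functor with value `k`, i.e. the unit of `𝓕`. -/
def constK : FF p := (Functor.const _).obj (ModuleCat.of (Kk p) (Kk p))

/-- The functor `P ∈ 𝓕`, `V ↦ k[V]`. -/
def Pfun : FF p where
  obj V := ModuleCat.of (Kk p) ((V : Type) →₀ Kk p)
  map f := ModuleCat.ofHom (Finsupp.lmapDomain (Kk p) (Kk p) f)
  map_id V := by
    apply ModuleCat.hom_ext
    exact Finsupp.lmapDomain_id _ _
  map_comp f g := by
    apply ModuleCat.hom_ext
    apply Finsupp.lhom_ext
    intro a b
    simp only [ModuleCat.hom_comp, ModuleCat.hom_ofHom, LinearMap.comp_apply,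
      Finsupp.lmapDomain_apply, Finsupp.mapDomain_single] <;> rfl

/-- The augmentation `P ⟶ k`, `[v] ↦ 1`. -/
def augP : Pfun p ⟶ constK p where
  app V := ModuleCat.ofHom (Finsupp.linearCombination (Kk p) (fun _ : (V : Type) => (1 : Kk p)))
  naturality := by
    intro V W f
    apply ModuleCat.hom_ext
    apply Finsupp.lhom_ext
    intro a b
    simp only [Pfun, constK, ModuleCat.hom_comp, ModuleCat.hom_ofHom]
    erw [LinearMap.comp_apply, LinearMap.comp_apply, Finsupp.lmapDomain_apply,
      Finsupp.mapDomain_single, Finsupp.linearCombination_single,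
      Finsupp.linearCombination_single]


/-- The reduced functor `P̄ ∈ 𝓕`, the kernel of the augmentation `P ⟶ k`. -/
def Pbar : FF p := kernel (augP p)

/-- The functor `I_W ∈ 𝓕`, `V ↦ (functions Hom(V,W) → k)`. -/
def Ifun (W : FGModuleCat.{0} (Kk p)) : FF p where
  obj V := ModuleCat.of (Kk p) ((V →ₗ[Kk p] W) → Kk p)
  map {V V'} f := ModuleCat.ofHom (LinearMap.funLeft (Kk p) (Kk p)
    (fun ℓ : (V' : Type _) →ₗ[Kk p] W => ℓ ∘ₗ f.hom.hom))
  map_id V := by ext φ; rfl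
  map_comp f g := by ext φ; rfl

/-- The functor `I = I_k ∈ 𝓕`. -/
def Icfun : FF p := Ifun p (FGModuleCat.of (Kk p) (Kk p))

/-- Evaluation at the zero homomorphism, `I ⟶ k`. -/
def evalZero : Icfun p ⟶ constK p where
  app V := ModuleCat.ofHom (LinearMap.proj (0 : V →ₗ[Kk p] Kk p))
  naturality := by
    intro V W f
    ext φ
    have : (0 : (W : Type) →ₗ[Kk p] Kk p) ∘ₗ f.hom.hom = 0 := by
      ext x; rfl
    exact congrArg φ this

/-- The reduced functor `Ī ∈ 𝓕` of functions vanishing at `0`. -/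
def Ibar : FF p := kernel (evalZero p)


/-- The largest subspace of `F(V)` belonging to a subfunctor of `F` that is
polynomial of degree at most `n`; objectwise, this is the value `(p_n F)(V)`. -/
def pSub (n : ℕ) (F : FF p) (V : FGModuleCat.{0} (Kk p)) :
    Submodule (Kk p) (F.obj V) :=
  ⨆ (A : FF p) (j : A ⟶ F) (_ : Mono j) (_ : IsPolyLE p n A),
    LinearMap.range (j.app V).hom


/-- Iterated objectwise tensor powers `A^{⊗n}` of an object of `𝓕`. -/
def objPow (p : ℕ) [Fact p.Prime] (A : FF p) : ℕ → FF p
  | 0 => 𝟙_ (FF p)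
  | 1 => A
  | n + 2 => objPow p A (n + 1) ⊗ A


/-!
Applying `Δ^{n+1}` to the unit `η_F` gives a split monomorphism (triangle identity), and
`Δ^{n+1}` preserves monomorphisms, since `Δ` is a retract of `F ↦ F(− ⊕ k)`: the map
`F ⟶ F(− ⊕ k)` is split by the projections `V ⊕ k → V`. Hence `Δ^{n+1}` kills `ker η_F`.
Conversely, if `Δ^{n+1}A = 0`, naturality of `η` makes every `A ⟶ F` followed by `η_F` factor
through `Δ^{n+1}A ⊗ Ī^{⊗(n+1)} = 0`, so it lifts to `ker η_F`. Thus `ker η_F ⟶ F` is a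
coreflection of `F` into the functors of degree at most `n`.
-/

namespace CategoryTheory

section

variable {C : Type*} [Category C]

def Limits.cokernelRetractOfIsSplitMono [Preadditive C] {X Y : C} (f : X ⟶ Y) [IsSplitMono f]
    [HasCokernel f] : Retract (cokernel f) Y where
  i := cokernel.desc f (𝟙 Y - retraction f ≫ f) (by simp)
  r := cokernel.π f
  retract := by ext; simp

lemma ObjectProperty.isLeftAdjoint_ι_of_forall_exists_mono (P : ObjectProperty C)
    (h : ∀ Y : C, ∃ (X : C) (i : X ⟶ Y), P X ∧ Mono i ∧
      ∀ (X' : C) (f : X' ⟶ Y), P X' → ∃ g : X' ⟶ X, g ≫ i = f) :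
    P.ι.IsLeftAdjoint := by
  refine Functor.isLeftAdjoint_of_rightAdjointObjIsDefined_eq_top (funext fun Y => ?_)
  obtain ⟨X, i, hX, hi, hfac⟩ := h Y
  refine eq_true (Functor.RepresentableBy.isRepresentable (Y := ⟨X, hX⟩)
    { homEquiv {X'} := Equiv.ofBijective (fun g => g.hom ≫ i)
        ⟨fun g g' hgg' => ObjectProperty.hom_ext _ ((cancel_mono i).1 hgg'), fun f =>
          let ⟨g, hg⟩ := hfac X'.obj f X'.property
          ⟨ObjectProperty.homMk g, hg⟩⟩
      homEquiv_comp := fun _ _ => Category.assoc _ _ _ })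

end

namespace Adjunction

variable {C D : Type*} [Category C] [Category D] [HasZeroMorphisms C]
  {L : C ⥤ D} {R : D ⥤ C}

lemma comp_unit_app_eq_zero (adj : L ⊣ R) {A X : C} (hA : IsZero (L.obj A)) (f : A ⟶ X) :
    f ≫ adj.unit.app X = 0 := by
  rw [← adj.unit_naturality, hA.eq_of_src (L.map f) (L.map 0), adj.unit_naturality, zero_comp]

lemma isZero_obj_kernel_unit_app (adj : L ⊣ R) [HasZeroMorphisms D] [L.PreservesMonomorphisms]
    (X : C) [HasKernel (adj.unit.app X)] : IsZero (L.obj (kernel (adj.unit.app X))) := by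
  have := adj.isLeftAdjoint
  have : IsSplitMono (L.map (adj.unit.app X)) := .mk' ⟨_, adj.left_triangle_components X⟩
  refine IsZero.of_mono_eq_zero (L.map (kernel.ι (adj.unit.app X))) ?_
  rw [← cancel_mono (L.map (adj.unit.app X)), ← L.map_comp, kernel.condition, L.map_zero,
    zero_comp]

lemma isLeftAdjoint_ι_isZero_obj (adj : L ⊣ R) [HasZeroMorphisms D] [HasKernels C]
    [L.PreservesMonomorphisms] : (ObjectProperty.ι fun X => IsZero (L.obj X)).IsLeftAdjoint :=
  ObjectProperty.isLeftAdjoint_ι_of_forall_exists_mono _ fun Y =>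
    ⟨_, kernel.ι (adj.unit.app Y), adj.isZero_obj_kernel_unit_app Y, inferInstance,
      fun _ f hf => ⟨kernel.lift _ f (adj.comp_unit_app_eq_zero hf f), kernel.lift_ι _ _ _⟩⟩

end Adjunction

end CategoryTheory

def counitPre : preAdd p ⟶ 𝟭 (FF p) where
  app F := Functor.whiskerRight (projOne p) F
  naturality _ _ α := by
    ext V : 2
    exact (α.naturality ((projOne p).app V)).symm

lemma unitPre_comp_counitPre : unitPre p ≫ counitPre p = 𝟙 _ := by
  ext F V : 4
  exact (F.map_comp _ _).symm.trans (F.map_id V)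

instance : IsSplitMono (unitPre p) := ⟨⟨counitPre p, unitPre_comp_counitPre p⟩⟩

instance : (preAdd p).PreservesMonomorphisms where
  preserves α _ := (NatTrans.mono_iff_mono_app _).2 fun _ => inferInstanceAs (Mono (α.app _))

instance : (Delta p).PreservesMonomorphisms :=
  .ofRetract (cokernelRetractOfIsSplitMono (unitPre p))

instance deltaIter_preservesMonomorphisms (m : ℕ) : (deltaIter p m).PreservesMonomorphisms := by
  induction m with
  | zero => exact inferInstanceAs (𝟭 (FF p)).PreservesMonomorphisms
  | succ m _ => exact inferInstanceAs (deltaIter p m ⋙ Delta p).PreservesMonomorphisms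

/-- For every `F ∈ 𝓕` and `n ≥ 0`, and any adjunction between `Δ^{n+1}`
and `− ⊗ Ī^{⊗(n+1)}`, the subfunctor `ker(η_F : F → Δ^{n+1}F ⊗ Ī^{⊗(n+1)})` (with `η` the
unit of the adjunction) is polynomial of degree at most `n` and contains every subfunctor
of `F` that is polynomial of degree at most `n`; consequently the inclusion of the full
subcategory of polynomial functors of degree at most `n` admits a right adjoint. -/
theorem stmt_6 (p : ℕ) [Fact p.Prime] (n : ℕ) (F : FF p)
    (adj : deltaIter p (n + 1) ⊣ tensorRight (objPow p (Ibar p) (n + 1))) :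
    IsPolyLE p n (kernel (adj.unit.app F)) ∧
    (∀ (A : FF p) (j : A ⟶ F), Mono j → IsPolyLE p n A →
      ∃ u : A ⟶ kernel (adj.unit.app F), u ≫ kernel.ι (adj.unit.app F) = j) ∧
    (ObjectProperty.ι (IsPolyLE p n)).IsLeftAdjoint :=
  ⟨adj.isZero_obj_kernel_unit_app F,
    fun _ j _ hA => ⟨kernel.lift _ j (adj.comp_unit_app_eq_zero hA j), kernel.lift_ι _ _ _⟩,
    adj.isLeftAdjoint_ι_isZero_obj⟩
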